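/- Assume E, E_err, and E_cor are all nonempty and that π < 1 and q > 0, where π = |E_err|/|E|, q = |{ω ∈ E_err : Q̂(ω) = Y(ω)}| / |E_err|, and r = |{ω ∈ E_cor : Q̂(ω) ≠ Y(ω)}| / |E_cor|. Then the refinement strictly improves accuracy, i.e., Acc_repl > Acc_base, if and only if r < (π/(1 − π))·q; that is, refinement is beneficial as long as the error-introduction rate stays below π/(1 − π) times the correction rate. -/

import Mathlib

open Finset

/-- Baseline accuracy of the teacher `Q`. -/
noncomputable def accBase {V K : Type*} [Fintype V] [DecidableEq K] (Q Y : V → K) : ℝ :=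
  ((univ.filter fun ω => Q ω = Y ω).card : ℝ) / (Fintype.card V : ℝ)

/-- Refined accuracy: teacher on `C = Ω \ E`, refiner on `E`. -/
noncomputable def accRepl {V K : Type*} [Fintype V] [DecidableEq V] [DecidableEq K]
    (Q Qhat Y : V → K) (E : Finset V) : ℝ :=
  ((((Eᶜ).filter fun ω => Q ω = Y ω).card : ℝ)
      + (((E.filter fun ω => Qhat ω = Y ω).card : ℝ))) / (Fintype.card V : ℝ)

/-- `E_err = {ω ∈ E : Q(ω) ≠ Y(ω)}`, the unreliable voxels misclassified by the teacher. -/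
def errSet {V K : Type*} [DecidableEq K] (Q Y : V → K) (E : Finset V) : Finset V :=
  E.filter fun ω => Q ω ≠ Y ω

/-- `E_cor = {ω ∈ E : Q(ω) = Y(ω)}`, the unreliable voxels correctly classified by the teacher. -/
def corSet {V K : Type*} [DecidableEq K] (Q Y : V → K) (E : Finset V) : Finset V :=
  E.filter fun ω => Q ω = Y ω

/-- Mask precision: `π = |E_err| / |E|`. -/
noncomputable def piVal {V K : Type*} [DecidableEq K] (Q Y : V → K) (E : Finset V) : ℝ :=
  ((errSet Q Y E).card : ℝ) / (E.card : ℝ)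

/-- Correction rate: `q = |{ω ∈ E_err : Q̂(ω) = Y(ω)}| / |E_err|`. -/
noncomputable def qVal {V K : Type*} [DecidableEq K] (Q Qhat Y : V → K) (E : Finset V) : ℝ :=
  (((errSet Q Y E).filter fun ω => Qhat ω = Y ω).card : ℝ) / ((errSet Q Y E).card : ℝ)

/-- Error-introduction rate: `r = |{ω ∈ E_cor : Q̂(ω) ≠ Y(ω)}| / |E_cor|`. -/
noncomputable def rVal {V K : Type*} [DecidableEq K] (Q Qhat Y : V → K) (E : Finset V) : ℝ :=
  (((corSet Q Y E).filter fun ω => Qhat ω ≠ Y ω).card : ℝ) / ((corSet Q Y E).card : ℝ)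

/-!
On `E` the refiner gains one voxel for every teacher error it fixes and loses one for every
correct teacher label it breaks, so `Acc_repl > Acc_base` exactly when fewer labels are broken
than fixed. Both rates can be put over the common denominator `|E_cor|`: `r` counts the broken
labels, and since `π / (1 - π) = |E_err| / |E_cor|`, the product `π / (1 - π) · q` counts the
fixed ones.
-/

section Counting

variable {V K : Type*} [DecidableEq K] (Q Qhat Y : V → K) (E : Finset V)

theorem card_corSet_add_card_errSet : #(corSet Q Y E) + #(errSet Q Y E) = #E :=
  card_filter_add_card_filter_not _

theorem card_filter_eq_card_compl_filter_add_card_corSet [Fintype V] [DecidableEq V] :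
    #{ω | Q ω = Y ω} = #{ω ∈ Eᶜ | Q ω = Y ω} + #(corSet Q Y E) := by
  simp only [corSet, card_filter]
  exact (sum_compl_add_sum E _).symm

theorem card_filter_eq_card_errSet_filter_add_card_corSet_filter :
    #{ω ∈ E | Qhat ω = Y ω} =
      #{ω ∈ errSet Q Y E | Qhat ω = Y ω} + #{ω ∈ corSet Q Y E | Qhat ω = Y ω} := by
  rw [add_comm, errSet, corSet, filter_comm, filter_comm (fun ω => Q ω ≠ Y ω)]
  exact (card_filter_add_card_filter_not _).symm

end Counting

section Accuracy

variable {V K : Type*} [Fintype V] [DecidableEq V] [DecidableEq K] (Q Qhat Y : V → K)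
  (E : Finset V)

theorem accRepl_sub_accBase :
    accRepl Q Qhat Y E - accBase Q Y =
      ((#{ω ∈ errSet Q Y E | Qhat ω = Y ω} : ℝ) - #{ω ∈ corSet Q Y E | Qhat ω ≠ Y ω}) /
        Fintype.card V := by
  have hcor := card_filter_add_card_filter_not (s := corSet Q Y E) (fun ω => Qhat ω = Y ω)
  rw [accRepl, accBase, ← sub_div, card_filter_eq_card_compl_filter_add_card_corSet Q Y E,
    card_filter_eq_card_errSet_filter_add_card_corSet_filter Q Qhat Y E, ← hcor]
  push_cast
  ring

theorem accBase_lt_accRepl_iff [Nonempty V] :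
    accBase Q Y < accRepl Q Qhat Y E ↔
      #{ω ∈ corSet Q Y E | Qhat ω ≠ Y ω} < #{ω ∈ errSet Q Y E | Qhat ω = Y ω} := by
  rw [← sub_pos, accRepl_sub_accBase, div_pos_iff_of_pos_right (by positivity), sub_pos]
  exact Nat.cast_lt

end Accuracy

section Rates

variable {V K : Type*} [DecidableEq K] (Q Qhat Y : V → K) (E : Finset V)

/-- If `E_cor = ∅`, both sides are `0` because `x / 0 = 0`. -/
theorem piVal_div_one_sub_piVal :
    piVal Q Y E / (1 - piVal Q Y E) = (#(errSet Q Y E) : ℝ) / #(corSet Q Y E) := by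
  rw [piVal, ← card_corSet_add_card_errSet Q Y E]
  push_cast
  set a : ℝ := (#(errSet Q Y E) : ℝ)
  set c : ℝ := (#(corSet Q Y E) : ℝ)
  rcases eq_or_ne (c + a) 0 with hE | hE
  · have ha : a = 0 := (add_eq_zero_iff_of_nonneg (by positivity) (by positivity)).mp hE |>.2
    simp [ha]
  · rw [show 1 - a / (c + a) = c / (c + a) by field_simp; ring, div_div_div_cancel_right₀ hE]

theorem piVal_div_one_sub_piVal_mul_qVal :
    piVal Q Y E / (1 - piVal Q Y E) * qVal Q Qhat Y E =
      (#{ω ∈ errSet Q Y E | Qhat ω = Y ω} : ℝ) / #(corSet Q Y E) := by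
  rw [piVal_div_one_sub_piVal, qVal]
  rcases eq_or_ne #(errSet Q Y E) 0 with ha | ha
  · simp [card_eq_zero.mp ha]
  · exact div_mul_div_cancel₀' (Nat.cast_ne_zero.mpr ha) _ _

theorem rVal_lt_div_card_corSet_iff (hCor : (corSet Q Y E).Nonempty) (n : ℕ) :
    rVal Q Qhat Y E < (n : ℝ) / #(corSet Q Y E) ↔ #{ω ∈ corSet Q Y E | Qhat ω ≠ Y ω} < n := by
  rw [rVal, div_lt_div_iff_of_pos_right (by exact_mod_cast hCor.card_pos)]
  exact Nat.cast_lt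

end Rates

theorem accRepl_gt_accBase_iff_rate_bound_general {V K : Type*} [Fintype V] [Nonempty V]
    [DecidableEq V] [DecidableEq K]
    (Q Qhat Y : V → K) (E : Finset V)
    (hCor : (corSet Q Y E).Nonempty) :
    accRepl Q Qhat Y E > accBase Q Y ↔
      rVal Q Qhat Y E < (piVal Q Y E / (1 - piVal Q Y E)) * qVal Q Qhat Y E := by
  rw [gt_iff_lt, accBase_lt_accRepl_iff, piVal_div_one_sub_piVal_mul_qVal,
    rVal_lt_div_card_corSet_iff Q Qhat Y E hCor]

/-- If `E`, `E_err`, `E_cor` are nonempty, `π < 1`, and `q > 0`, then refinement strictly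
improves accuracy, i.e. `Acc_repl > Acc_base`, if and only if the error-introduction rate
stays below `π/(1 − π)` times the correction rate: `r < (π/(1 − π))·q`. -/
theorem accRepl_gt_accBase_iff_rate_bound {V K : Type*} [Fintype V] [Nonempty V]
    [DecidableEq V] [DecidableEq K]
    (Q Qhat Y : V → K) (E : Finset V)
    (hE : E.Nonempty) (hErr : (errSet Q Y E).Nonempty) (hCor : (corSet Q Y E).Nonempty)
    (hpi : piVal Q Y E < 1) (hq : qVal Q Qhat Y E > 0) :
    accRepl Q Qhat Y E > accBase Q Y ↔
      rVal Q Qhat Y E < (piVal Q Y E / (1 - piVal Q Y E)) * qVal Q Qhat Y E :=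
  accRepl_gt_accBase_iff_rate_bound_general Q Qhat Y E hCor
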